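/- The Heawood graph has distinguishing number 2. -/

import Mathlib

/-- A coloring `c` of the vertices of `G` is distinguishing if the only
color-preserving automorphism of `G` is the identity. -/
def SimpleGraph.IsDistinguishing {V α : Type*} (G : SimpleGraph V) (c : V → α) : Prop :=
  ∀ φ : G ≃g G, (∀ v, c (φ v) = c v) → ∀ v, φ v = v

/-- The distinguishing number of a graph: the least `k` such that some
`k`-coloring of the vertices is preserved only by the identity automorphism. -/
noncomputable def SimpleGraph.distinguishingNumber {V : Type*} (G : SimpleGraph V) : ℕ :=
  sInf {k : ℕ | ∃ c : V → Fin k, G.IsDistinguishing c}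

/-- The Heawood graph: the point-line incidence graph of the Fano plane, realized
via the perfect difference set `{0, 1, 3}` modulo 7 (point `p` lies on line `l`
iff `l - p ∈ {0, 1, 3}`). -/
def heawood : SimpleGraph (ZMod 7 ⊕ ZMod 7) :=
  SimpleGraph.fromRel (fun a b => ∃ p l : ZMod 7,
    a = Sum.inl p ∧ b = Sum.inr l ∧ (l - p = 0 ∨ l - p = 1 ∨ l - p = 3))


/-!
An automorphism preserving a colouring `c` also preserves the refined colouring recording, for
each vertex, its colour and how many neighbours of each colour it has. If some vertex is the only
one with its refined colour, it is fixed; then a vertex that is the only one with its refined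
colour and its adjacencies to the vertices fixed so far is fixed as well, and so on. For the
2-colouring of the Heawood graph whose white vertices are the points `0, 1, 2, 3` and the lines
`0, 2`, this propagation fixes all fourteen vertices, starting from the point `3`, the only white
vertex without white neighbours. A single colour does not suffice, since the rotation `x ↦ x + 1`
is an automorphism without fixed points.
-/

open Finset

namespace SimpleGraph

variable {V α β : Type*} {G : SimpleGraph V}

theorem distinguishingNumber_le {k : ℕ} {c : V → Fin k} (hc : G.IsDistinguishing c) :
    G.distinguishingNumber ≤ k :=
  Nat.sInf_le ⟨c, hc⟩

theorem IsDistinguishing.two_le_distinguishingNumber {k : ℕ} {c : V → Fin k}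
    (hc : G.IsDistinguishing c) {φ : G ≃g G} {v : V} (hv : φ v ≠ v) :
    2 ≤ G.distinguishingNumber := by
  refine le_csInf ⟨k, c, hc⟩ fun m ⟨c', hc'⟩ => ?_
  by_contra! hm
  have : Subsingleton (Fin m) := Fin.subsingleton_iff_le_one.mpr (by omega)
  exact hv (hc' φ (fun _ => Subsingleton.elim _ _) v)

section Refinement

variable [Fintype V] [DecidableRel G.Adj] [DecidableEq α]

variable (G) in
def colorRefinement (c : V → α) (v : V) : α × (α → ℕ) :=
  (c v, fun a => #{w | G.Adj v w ∧ c w = a})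

theorem colorRefinement_iso_apply {c : V → α} {φ : G ≃g G} (hφ : ∀ v, c (φ v) = c v) (v : V) :
    G.colorRefinement c (φ v) = G.colorRefinement c v := by
  refine Prod.ext (hφ v) (funext fun a => (card_equiv φ.toEquiv fun w => ?_).symm)
  simp [hφ, φ.map_adj_iff]

end Refinement

def IsForcedSeq (G : SimpleGraph V) (f : V → β) : List V → List V → Prop
  | _, [] => True
  | S, v :: l =>
    (∀ u, f u = f v → (∀ x ∈ S, G.Adj u x ↔ G.Adj v x) → u = v) ∧ IsForcedSeq G f (v :: S) l

instance instDecidableIsForcedSeq [Fintype V] [DecidableEq V] [DecidableEq β] [DecidableRel G.Adj]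
    (f : V → β) : ∀ S l, Decidable (G.IsForcedSeq f S l)
  | _, [] => isTrue trivial
  | S, v :: l =>
    haveI := instDecidableIsForcedSeq f (v :: S) l
    inferInstanceAs (Decidable (_ ∧ _))

theorem IsForcedSeq.apply_eq {f : V → β} {φ : G ≃g G} (hf : ∀ v, f (φ v) = f v) :
    ∀ {S l : List V}, G.IsForcedSeq f S l → (∀ x ∈ S, φ x = x) → ∀ x ∈ l, φ x = x
  | _, [], _, _ => by simp
  | S, v :: l, ⟨hv, hl⟩, hS => by
    have hφv : φ v = v := hv (φ v) (hf v) fun x hx => by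
      simpa only [hS x hx] using φ.map_adj_iff (v := v) (w := x)
    exact List.forall_mem_cons.mpr ⟨hφv, hl.apply_eq hf (List.forall_mem_cons.mpr ⟨hφv, hS⟩)⟩

theorem isDistinguishing_of_isForcedSeq [Fintype V] [DecidableEq V] [DecidableRel G.Adj]
    [DecidableEq α] {c : V → α} {l : List V} (hl : l.toFinset = univ)
    (h : G.IsForcedSeq (G.colorRefinement c) [] l) : G.IsDistinguishing c := fun _ hφ v =>
  h.apply_eq (colorRefinement_iso_apply hφ) (by simp) v (List.mem_toFinset.mp (hl ▸ mem_univ v))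

end SimpleGraph

open SimpleGraph Sum

theorem heawood_adj_inl_inr {p l : ZMod 7} :
    heawood.Adj (inl p) (inr l) ↔ l - p = 0 ∨ l - p = 1 ∨ l - p = 3 := by
  simp [heawood]

theorem heawood_adj_inr_inl {p l : ZMod 7} :
    heawood.Adj (inr l) (inl p) ↔ l - p = 0 ∨ l - p = 1 ∨ l - p = 3 :=
  (heawood.adj_comm _ _).trans heawood_adj_inl_inr

theorem not_heawood_adj_inl_inl {p q : ZMod 7} : ¬ heawood.Adj (inl p) (inl q) := by
  simp [heawood]

theorem not_heawood_adj_inr_inr {l m : ZMod 7} : ¬ heawood.Adj (inr l) (inr m) := by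
  simp [heawood]

instance : DecidableRel heawood.Adj
  | inl _, inl _ => isFalse not_heawood_adj_inl_inl
  | inl _, inr _ => decidable_of_iff' _ heawood_adj_inl_inr
  | inr _, inl _ => decidable_of_iff' _ heawood_adj_inr_inl
  | inr _, inr _ => isFalse not_heawood_adj_inr_inr

def heawoodRotation (t : ZMod 7) : heawood ≃g heawood where
  toEquiv := Equiv.sumCongr (Equiv.addRight t) (Equiv.addRight t)
  map_rel_iff' {a b} := by
    rcases a with p | l <;> rcases b with q | m <;>
      simp [heawood_adj_inl_inr, heawood_adj_inr_inl, not_heawood_adj_inl_inl,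
        not_heawood_adj_inr_inr]

def heawoodColoring : ZMod 7 ⊕ ZMod 7 → Fin 2 :=
  Sum.elim (fun p => if p.val ≤ 3 then 0 else 1) (fun l => if l = 0 ∨ l = 2 then 0 else 1)

theorem heawoodColoring_isDistinguishing : heawood.IsDistinguishing heawoodColoring :=
  isDistinguishing_of_isForcedSeq
    (l := [inl 3, inl 5, inl 4, inl 6, inr 0, inl 0, inr 1, inl 1, inl 2, inr 2, inr 3, inr 4,
      inr 5, inr 6])
    (by decide) (by decide)

/-- The Heawood graph has distinguishing number 2. -/
theorem distinguishingNumber_heawood : heawood.distinguishingNumber = 2 :=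
  le_antisymm (distinguishingNumber_le heawoodColoring_isDistinguishing)
    (heawoodColoring_isDistinguishing.two_le_distinguishingNumber
      (φ := heawoodRotation 1) (v := inl 0) (by decide))
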